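/- arXiv:2211.01612 — 6 statements merged into one kernel-verified Lean document; each statement's English description precedes it below -/
import Mathlib

section
/- (Lemma 1, feasibility part.) Let l be a feasible labeling of the complete bipartite graph G, let S ⊆ A be nonempty with T = N_l(S) ≠ B, and let α_l = min_{a∈S, b∉T} (Weight(a,b) − l(a) − l(b)). Define l' by l'(v) = l(v) + α_l for v ∈ S, l'(v) = l(v) − α_l for v ∈ T, and l'(v) = l(v) otherwise. Then l' is a feasible labeling, i.e. l'(a) + l'(b) ≤ Weight(a,b) for all a ∈ A and b ∈ B. -/
open scoped Classical

/-- **Lemma 1, feasibility part.** Let `l` be a feasible labeling, `S ⊆ A`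
nonempty with `T = N_l(S) ≠ B`, and `αl = min_{a∈S, b∉T} (Weight(a,b) − l(a) − l(b))`.
Update the labels by adding `αl` on `S`, subtracting `αl` on `T`, leaving the rest
unchanged.  Then the new labeling `l'` is again feasible. -/
theorem updated_labeling_feasible {A B : Type*} [Fintype A] [Fintype B]
    [Nonempty A] [Nonempty B]
    (Weight : A → B → ℝ) (lA : A → ℝ) (lB : B → ℝ)
    (hfeas : ∀ a b, lA a + lB b ≤ Weight a b)
    (S : Set A) (hS : S.Nonempty)
    (T : Set B) (hT : T = {b | ∃ a ∈ S, lA a + lB b = Weight a b})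
    (hTne : T ≠ Set.univ)
    (αl : ℝ)
    (hαl : IsLeast {x : ℝ | ∃ a ∈ S, ∃ b ∉ T, x = Weight a b - lA a - lB b} αl)
    (l'A : A → ℝ) (l'B : B → ℝ)
    (hl'A : ∀ a, l'A a = if a ∈ S then lA a + αl else lA a)
    (hl'B : ∀ b, l'B b = if b ∈ T then lB b - αl else lB b) :
    ∀ a b, l'A a + l'B b ≤ Weight a b := by
  have hα0 : 0 ≤ αl := by
    obtain ⟨a, haS, b, hbT, hx⟩ := hαl.1
    have := hfeas a b
    linarith
  intro a b
  rw [hl'A a, hl'B b]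
  by_cases haS : a ∈ S <;> by_cases hbT : b ∈ T <;>
    simp [haS, hbT]
  · linarith [hfeas a b]
  · have := hαl.2 ⟨a, haS, b, hbT, rfl⟩
    linarith
  · linarith [hfeas a b]
  · linarith [hfeas a b]
end

section
/- (Theorem 1, Kuhn.) Let l be a feasible labeling of the complete bipartite graph G with |A| = |B| = n, and let σ : A → B be a perfect matching all of whose edges lie in the equality graph of l, i.e. l(a) + l(σ(a)) = Weight(a, σ(a)) for all a ∈ A. Then σ is a minimum weight perfect matching: for every bijection σ' : A → B, Σ_{a∈A} Weight(a, σ(a)) ≤ Σ_{a∈A} Weight(a, σ'(a)). -/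
/-- **Theorem 1, Kuhn.** Let `l` be a feasible labeling of the complete
bipartite graph on finite parts `A` and `B` with `|A| = |B|`, and let `σ : A → B` be a
perfect matching all of whose edges lie in the equality graph of `l`.  Then `σ` is a
minimum weight perfect matching. -/
theorem equality_graph_matching_is_minimum {A B : Type*} [Fintype A] [Fintype B]
    (Weight : A → B → ℝ) (lA : A → ℝ) (lB : B → ℝ)
    (hfeas : ∀ a b, lA a + lB b ≤ Weight a b)
    (σ : A ≃ B)
    (hσ : ∀ a, lA a + lB (σ a) = Weight a (σ a)) :
    ∀ σ' : A ≃ B, ∑ a, Weight a (σ a) ≤ ∑ a, Weight a (σ' a) := by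
  intro σ'
  calc ∑ a, Weight a (σ a) = ∑ a, (lA a + lB (σ a)) := by
        simp [hσ]
    _ = ∑ a, lA a + ∑ b, lB b := by
        rw [Finset.sum_add_distrib, Equiv.sum_comp σ lB]
    _ = ∑ a, (lA a + lB (σ' a)) := by
        rw [Finset.sum_add_distrib, Equiv.sum_comp σ' lB]
    _ ≤ ∑ a, Weight a (σ' a) := Finset.sum_le_sum fun a _ => hfeas a (σ' a)
end

section
/- (Lemma 2, constructive direction.) For every MMDC L between A and B, there exists a perfect matching M' of the constructed graph G such that Weight(Main(M')) = c(L). -/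
open Finset

section Construction

variable {s t : ℕ}

/-- The left part `S` of the constructed complete bipartite graph `G`:
`A_i` (`α i` copies of `a_i`), `A'_i` (`α' i − α i` copies of `a_i`),
the dummy sets `X_j` (`β' j − β j` vertices) and `W_j` (`s − β' j` vertices). -/
abbrev LeftV (s t : ℕ) (α α' : Fin s → ℕ) (β β' : Fin t → ℕ) : Type :=
  ((Σ i : Fin s, Fin (α i)) ⊕ (Σ i : Fin s, Fin (α' i - α i))) ⊕
  ((Σ j : Fin t, Fin (β' j - β j)) ⊕ (Σ j : Fin t, Fin (s - β' j)))

/-- The right part `T` of the constructed graph: the sets `Bset_i` (vertex `(i, j)`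
is the copy `b_{ji}` of `b_j` lying in `Bset_i`; thus `B_j = {(i, j) : i}`) together
with the compensator set `Y` of `Σ_i α'_i − Σ_j β_j` dummy vertices. -/
abbrev RightV (s t : ℕ) (α' : Fin s → ℕ) (β : Fin t → ℕ) : Type :=
  (Fin s × Fin t) ⊕ Fin (∑ i, α' i - ∑ j, β j)

variable {α α' : Fin s → ℕ} {β β' : Fin t → ℕ}

/-- Adjacency in the constructed graph `G`: each vertex of `A_i ∪ A'_i` is joined to every
vertex of `Bset_i`; each vertex of `A'_i` is joined to every vertex of `Y`; each vertex of
`X_j` is joined to every vertex of `B_j` and to every vertex of `Y`; each vertex of `W_j`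
is joined to every vertex of `B_j`. -/
def Adj : LeftV s t α α' β β' → RightV s t α' β → Prop
  | .inl (.inl ⟨i, _⟩), .inl (i', _) => i' = i       -- A_i — Bset_i
  | .inl (.inl _), .inr _ => False
  | .inl (.inr ⟨i, _⟩), .inl (i', _) => i' = i       -- A'_i — Bset_i
  | .inl (.inr _), .inr _ => True                     -- A'_i — Y
  | .inr (.inl ⟨j, _⟩), .inl (_, j') => j' = j       -- X_j — B_j
  | .inr (.inl _), .inr _ => True                     -- X_j — Y
  | .inr (.inr ⟨j, _⟩), .inl (_, j') => j' = j       -- W_j — B_j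
  | .inr (.inr _), .inr _ => False

/-- Edge weights of the constructed graph `G`. -/
def wt (δ : Fin s → Fin t → ℝ) (γ' γ'' : ℝ) : LeftV s t α α' β β' → RightV s t α' β → ℝ
  | .inl _, .inl (i, j) => δ i j     -- main edges into b_{ji}
  | .inl (.inl _), .inr _ => 0
  | .inl (.inr _), .inr _ => γ'      -- A'_i — Y
  | .inr (.inl _), .inl _ => γ'      -- X_j — B_j
  | .inr (.inl _), .inr _ => γ''     -- X_j — Y
  | .inr (.inr _), _ => 0            -- W_j — B_j

/-- An edge is a main edge when it joins `⋃_i (A_i ∪ A'_i)` to `⋃_i Bset_i`. -/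
def IsMainEdge : LeftV s t α α' β β' → RightV s t α' β → Bool
  | .inl _, .inl _ => true
  | _, _ => false

/-- A perfect matching of `G` is a bijection between the two parts all of whose
pairs are edges of `G`. -/
def IsPM (M : LeftV s t α α' β β' ≃ RightV s t α' β) : Prop :=
  ∀ v, Adj v (M v)

/-- `Weight(M)`, the total weight of a perfect matching. -/
noncomputable def totalWeight (δ : Fin s → Fin t → ℝ) (γ' γ'' : ℝ)
    (M : LeftV s t α α' β β' ≃ RightV s t α' β) : ℝ :=
  ∑ v, wt δ γ' γ'' v (M v)

/-- `Weight(Main(M))`, the total weight of the main edges of `M`. -/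
noncomputable def mainWeight (δ : Fin s → Fin t → ℝ) (γ' γ'' : ℝ)
    (M : LeftV s t α α' β β' ≃ RightV s t α' β) : ℝ :=
  ∑ v ∈ univ.filter (fun v => IsMainEdge v (M v)), wt δ γ' γ'' v (M v)

/-- `|Main(M)|`, the number of main edges of `M`. -/
def mainCount (M : LeftV s t α α' β β' ≃ RightV s t α' β) : ℕ :=
  (univ.filter (fun v => IsMainEdge v (M v))).card

/-- `L ⊆ A × B` is an MMDC between `A` and `B`: each `a_i` lies in at least `α i` and at
most `α' i` pairs, and each `b_j` lies in at least `β j` and at most `β' j` pairs. -/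
def IsMMDC (α α' : Fin s → ℕ) (β β' : Fin t → ℕ) (L : Finset (Fin s × Fin t)) : Prop :=
  (∀ i, α i ≤ (L.filter (fun p => p.1 = i)).card ∧
    (L.filter (fun p => p.1 = i)).card ≤ α' i) ∧
  (∀ j, β j ≤ (L.filter (fun p => p.2 = j)).card ∧
    (L.filter (fun p => p.2 = j)).card ≤ β' j)

/-- `c(L)`, the cost of a matching `L` between `A` and `B`. -/
noncomputable def cost (δ : Fin s → Fin t → ℝ) (L : Finset (Fin s × Fin t)) : ℝ :=
  ∑ p ∈ L, δ p.1 p.2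

end Construction

/-!
Write `d(a_i)`, `d(b_j)` for the number of pairs of `L` containing `a_i`, `b_j`. The copy `b_{ji}`
of each pair `(a_i, b_j) ∈ L` is matched into `A_i ∪ A'_i`, using all of `A_i` (possible since
`α_i ≤ d(a_i) ≤ α'_i`); the other copies in `B_j` are matched to all of `W_j` and part of `X_j`
(possible since `β_j ≤ d(b_j) ≤ β'_j ≤ s`); and the `α'_i - d(a_i)` and `d(b_j) - β_j` vertices
of `A'_i` and `X_j` left over are exactly `|Y|` many, because both degree sums equal `|L|`. The
main edges of this matching are then exactly the copies of the pairs of `L`.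
-/

theorem Finset.card_filter_fst_eq {ι κ : Type*} [Fintype κ] [DecidableEq ι] [DecidableEq κ]
    (L : Finset (ι × κ)) (i : ι) :
    #(L.filter (·.1 = i)) = Fintype.card {j // (i, j) ∈ L} := by
  rw [Fintype.card_subtype, ← card_image_of_injective (univ.filter fun j => (i, j) ∈ L)
    (Prod.mk_right_injective i)]
  congr 1
  ext ⟨i', j⟩
  simp only [mem_filter, mem_image, mem_univ, true_and, Prod.mk.injEq]
  constructor
  · rintro ⟨hL, rfl⟩
    exact ⟨j, hL, rfl, rfl⟩
  · rintro ⟨j, hL, rfl, rfl⟩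
    exact ⟨hL, rfl⟩

theorem Finset.card_filter_snd_eq {ι κ : Type*} [Fintype ι] [DecidableEq ι] [DecidableEq κ]
    (L : Finset (ι × κ)) (j : κ) :
    #(L.filter (·.2 = j)) = Fintype.card {i // (i, j) ∈ L} := by
  rw [Fintype.card_subtype, ← card_image_of_injective (univ.filter fun i => (i, j) ∈ L)
    (Prod.mk_left_injective j)]
  congr 1
  ext ⟨i, j'⟩
  simp only [mem_filter, mem_image, mem_univ, true_and, Prod.mk.injEq]
  constructor
  · rintro ⟨hL, rfl⟩
    exact ⟨i, hL, rfl, rfl⟩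
  · rintro ⟨i, hL, rfl, rfl⟩
    exact ⟨hL, rfl⟩

theorem Finset.sum_tsub_add_sum_tsub {ι κ : Type*} (I : Finset ι) (J : Finset κ)
    {a r : ι → ℕ} {b c : κ → ℕ} (hr : ∀ i ∈ I, r i ≤ a i) (hb : ∀ j ∈ J, b j ≤ c j)
    (hrc : ∑ i ∈ I, r i = ∑ j ∈ J, c j) :
    ∑ i ∈ I, (a i - r i) + ∑ j ∈ J, (c j - b j) = ∑ i ∈ I, a i - ∑ j ∈ J, b j := by
  have := sum_le_sum hr
  have := sum_le_sum hb
  rw [sum_tsub_distrib I hr, sum_tsub_distrib J hb]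
  omega

theorem Equiv.exists_sum_isLeft_apply_inl {α β γ δ : Type*} [Fintype α] [Fintype β]
    [Fintype γ] [Fintype δ] (hαγ : Fintype.card α ≤ Fintype.card γ)
    (hcard : Fintype.card α + Fintype.card β = Fintype.card γ + Fintype.card δ) :
    ∃ e : α ⊕ β ≃ γ ⊕ δ, ∀ a, (e (.inl a)).isLeft := by
  let k := Fintype.card γ - Fintype.card α
  have eβ : β ≃ Fin k ⊕ δ :=
    Fintype.equivOfCardEq (by simp only [Fintype.card_sum, Fintype.card_fin]; omega)
  have eγ : α ⊕ Fin k ≃ γ :=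
    Fintype.equivOfCardEq (by simp only [Fintype.card_sum, Fintype.card_fin]; omega)
  exact ⟨((Equiv.refl α).sumCongr eβ).trans
    ((Equiv.sumAssoc _ _ _).symm.trans (eγ.sumCongr (Equiv.refl δ))), fun _ => rfl⟩

section Matching

/- `row i` splits `A_i ∪ A'_i` between the copies in `Bset_i` of the pairs of `L` and a leftover
`P i` destined for `Y`; `col j` splits `X_j ∪ W_j` between the copies in `B_j` of the pairs
outside `L` and a leftover `Q j` destined for `Y`. -/
variable {s t : ℕ} {α α' : Fin s → ℕ} {β β' : Fin t → ℕ} (L : Finset (Fin s × Fin t))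
  {P : Fin s → Type*} {Q : Fin t → Type*}
  (row : ∀ i, Fin (α i) ⊕ Fin (α' i - α i) ≃ {j // (i, j) ∈ L} ⊕ P i)
  (col : ∀ j, Fin (β' j - β j) ⊕ Fin (s - β' j) ≃ {i // (i, j) ∉ L} ⊕ Q j)
  (slack : (Σ i, P i) ⊕ (Σ j, Q j) ≃ Fin (∑ i, α' i - ∑ j, β j))

def mmdcMatching : LeftV s t α α' β β' ≃ RightV s t α' β :=
  (Equiv.sumCongr
    ((Equiv.sigmaSumDistrib _ _).symm.trans
      ((Equiv.sigmaCongrRight row).trans (Equiv.sigmaSumDistrib _ _)))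
    ((Equiv.sigmaSumDistrib _ _).symm.trans
      ((Equiv.sigmaCongrRight col).trans (Equiv.sigmaSumDistrib _ _)))).trans <|
  (Equiv.sumSumSumComm _ _ _ _).trans <|
  Equiv.sumCongr
    ((Equiv.sumCongr (Equiv.subtypeProdEquivSigmaSubtype fun i j => (i, j) ∈ L).symm
      ((Equiv.subtypeProdEquivSigmaSubtype fun j i => (i, j) ∉ L).symm.trans
        ((Equiv.prodComm _ _).subtypeEquiv fun _ => Iff.rfl))).trans
      (Equiv.sumCompl (· ∈ L)))
    slack

theorem mmdcMatching_inl (i : Fin s) (x : Fin (α i) ⊕ Fin (α' i - α i)) :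
    mmdcMatching L row col slack (.inl (Equiv.sigmaSumDistrib _ _ ⟨i, x⟩)) =
      (row i x).elim (fun j => .inl (i, j.1)) (fun p => .inr (slack (.inl ⟨i, p⟩))) := by
  simp only [mmdcMatching, Equiv.trans_apply, Equiv.sumCongr_apply, Sum.map_inl,
    Equiv.symm_apply_apply, Equiv.sigmaCongrRight_apply]
  cases row i x <;> rfl

theorem mmdcMatching_inr (j : Fin t) (x : Fin (β' j - β j) ⊕ Fin (s - β' j)) :
    mmdcMatching L row col slack (.inr (Equiv.sigmaSumDistrib _ _ ⟨j, x⟩)) =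
      (col j x).elim (fun i => .inl (i.1, j)) (fun q => .inr (slack (.inr ⟨j, q⟩))) := by
  simp only [mmdcMatching, Equiv.trans_apply, Equiv.sumCongr_apply, Sum.map_inr,
    Equiv.symm_apply_apply, Equiv.sigmaCongrRight_apply]
  cases col j x <;> rfl

variable {L row col}

theorem adj_mmdcMatching_and_isLeft_iff (hrow : ∀ i a, (row i (.inl a)).isLeft)
    (hcol : ∀ j a, (col j (.inr a)).isLeft) (v : LeftV s t α α' β β') :
    Adj v (mmdcMatching L row col slack v) ∧
      ∀ p, mmdcMatching L row col slack v = .inl p → (v.isLeft ↔ p ∈ L) := by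
  rcases v with x | x <;> obtain ⟨⟨k, y⟩, rfl⟩ := (Equiv.sigmaSumDistrib _ _).surjective x
  · rw [mmdcMatching_inl]
    rcases hy : row k y with j | q
    · refine ⟨by cases y <;> rfl, ?_⟩
      rintro p ⟨⟩
      simpa using j.2
    · refine ⟨?_, by simp⟩
      cases y with
      | inl a => simpa [hy] using hrow k a
      | inr a => trivial
  · rw [mmdcMatching_inr]
    rcases hy : col k y with i | q
    · refine ⟨by cases y <;> rfl, ?_⟩
      rintro p ⟨⟩
      simpa using i.2
    · refine ⟨?_, by simp⟩
      cases y with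
      | inl a => trivial
      | inr a => simpa [hy] using hcol k a

end Matching

theorem mainWeight_eq_cost {s t : ℕ} {α α' : Fin s → ℕ} {β β' : Fin t → ℕ}
    (δ : Fin s → Fin t → ℝ) (γ' γ'' : ℝ) {L : Finset (Fin s × Fin t)}
    (M : LeftV s t α α' β β' ≃ RightV s t α' β)
    (hM : ∀ v p, M v = .inl p → (v.isLeft ↔ p ∈ L)) :
    mainWeight δ γ' γ'' M = cost δ L := by
  have main_inl (p : Fin s × Fin t) :
      (if IsMainEdge (M.symm (.inl p)) (.inl p) then wt δ γ' γ'' (M.symm (.inl p)) (.inl p)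
        else 0) = if p ∈ L then δ p.1 p.2 else 0 := by
    have h := hM _ p (M.apply_symm_apply _)
    generalize M.symm (.inl p) = v at h ⊢
    rcases v with v | v <;> simp_all [IsMainEdge, wt]
  have not_main_inr (v : LeftV s t α α' β β') y : IsMainEdge v (.inr y) = false := by
    cases v <;> rfl
  rw [mainWeight, sum_filter, Fintype.sum_equiv M _
    (fun w => if IsMainEdge (M.symm w) w then wt δ γ' γ'' (M.symm w) w else 0) (by simp),
    Fintype.sum_sum_type]
  simp only [main_inl, not_main_inr, Bool.false_eq_true, if_false, sum_const_zero, add_zero,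
    sum_ite_mem, univ_inter, cost]

theorem exists_pm_of_mmdc_general {s t : ℕ} (α α' : Fin s → ℕ) (β β' : Fin t → ℕ)
    (δ : Fin s → Fin t → ℝ) (γ' γ'' : ℝ)
    (hβ's : ∀ j, β' j ≤ s)
    (L : Finset (Fin s × Fin t)) (hL : IsMMDC α α' β β' L) :
    ∃ M : LeftV s t α α' β β' ≃ RightV s t α' β,
      IsPM M ∧ mainWeight δ γ' γ'' M = cost δ L := by
  classical
  obtain ⟨hdegA, hdegB⟩ := hL
  choose row hrow using fun i => Equiv.exists_sum_isLeft_apply_inl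
    (α := Fin (α i)) (β := Fin (α' i - α i))
    (γ := {j // (i, j) ∈ L}) (δ := Fin (α' i - #(L.filter (·.1 = i))))
    (by simp only [Fintype.card_fin, ← card_filter_fst_eq]; exact (hdegA i).1)
    (by simp only [Fintype.card_fin, ← card_filter_fst_eq]; have := hdegA i; omega)
  choose col hcol using fun j => Equiv.exists_sum_isLeft_apply_inl
    (α := Fin (s - β' j)) (β := Fin (β' j - β j))
    (γ := {i // (i, j) ∉ L}) (δ := Fin (#(L.filter (·.2 = j)) - β j))
    (by simp only [Fintype.card_fin, Fintype.card_subtype_compl, ← card_filter_snd_eq]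
        have := hdegB j; omega)
    (by simp only [Fintype.card_fin, Fintype.card_subtype_compl, ← card_filter_snd_eq]
        have := hdegB j; have := hβ's j; omega)
  have slack : (Σ i, Fin (α' i - #(L.filter (·.1 = i)))) ⊕
      (Σ j, Fin (#(L.filter (·.2 = j)) - β j)) ≃ Fin (∑ i, α' i - ∑ j, β j) := by
    refine Fintype.equivOfCardEq ?_
    simp only [Fintype.card_sum, Fintype.card_sigma, Fintype.card_fin]
    refine sum_tsub_add_sum_tsub _ _ (fun i _ => (hdegA i).2) (fun j _ => (hdegB j).1) ?_
    rw [← card_eq_sum_card_fiberwise fun p _ => mem_univ p.1,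
      ← card_eq_sum_card_fiberwise fun p _ => mem_univ p.2]
  have hM := adj_mmdcMatching_and_isLeft_iff (col := fun j => (Equiv.sumComm _ _).trans (col j))
    slack hrow hcol
  exact ⟨_, fun v => (hM v).1, mainWeight_eq_cost δ γ' γ'' _ fun v => (hM v).2⟩

/-- **Lemma 2, constructive direction.** For every MMDC `L` between `A`
and `B`, there exists a perfect matching `M'` of the constructed graph `G` with
`Weight(Main(M')) = c(L)`. -/
theorem exists_pm_of_mmdc {s t : ℕ} (α α' : Fin s → ℕ) (β β' : Fin t → ℕ)
    (δ : Fin s → Fin t → ℝ) (γ' γ'' : ℝ)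
    (hs : 1 ≤ s) (ht : 1 ≤ t)
    (hδ0 : ∀ i j, 0 ≤ δ i j)
    (hα1 : ∀ i, 1 ≤ α i) (hαα : ∀ i, α i ≤ α' i) (hα't : ∀ i, α' i ≤ t)
    (hβ1 : ∀ j, 1 ≤ β j) (hββ : ∀ j, β j ≤ β' j) (hβ's : ∀ j, β' j ≤ s)
    (hsum : ∑ j, β j ≤ ∑ i, α' i)
    (hγ' : ∀ i j, δ i j < γ') (hγ'' : γ' < γ'')
    (L : Finset (Fin s × Fin t)) (hL : IsMMDC α α' β β' L) :
    ∃ M : LeftV s t α α' β β' ≃ RightV s t α' β,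
      IsPM M ∧ mainWeight δ γ' γ'' M = cost δ L :=
  exists_pm_of_mmdc_general α α' β β' δ γ' γ'' hβ's L hL
end

section
/- (Lemma 4, extraction direction.) Let M be any perfect matching of the constructed graph G, and let L' = {(a_i,b_j) : M contains a main edge joining a vertex of A_i ∪ A'_i to the vertex b_{ji}}. Then L' is an MMDC between A and B and c(L') = Weight(Main(M)). -/
open Finset

/-! Every vertex of `A_i` is matched into `Bset_i`, every vertex of `W_j` into `B_j`, and a copy
`b_{ji}` that is not matched into `A_i ∪ A'_i` is matched into `X_j ∪ W_j`. Counting through the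
injection `b_{ji} ↦ M⁻¹(b_{ji})` therefore gives `α_i ≤ deg a_i ≤ |A_i ∪ A'_i| = α'_i`, and
`s - deg b_j` lies between `|W_j| = s - β'_j` and `|X_j ∪ W_j| = s - β_j`. The cost identity is
the reindexing of the main edges of `M` along `M⁻¹`. -/

section Extraction

variable {s t : ℕ} {α α' : Fin s → ℕ} {β β' : Fin t → ℕ}

/-- The paper's `L'`. -/
def mainPairs (M : LeftV s t α α' β β' ≃ RightV s t α' β) : Finset (Fin s × Fin t) :=
  univ.filter fun p => (M.symm (Sum.inl p)).isLeft

def blockA (i : Fin s) : Finset (LeftV s t α α' β β') :=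
  univ.map (((Function.Embedding.sigmaMk i).trans .inl).trans .inl)

def blockA' (i : Fin s) : Finset (LeftV s t α α' β β') :=
  univ.map (((Function.Embedding.sigmaMk i).trans .inr).trans .inl)

def blockX (j : Fin t) : Finset (LeftV s t α α' β β') :=
  univ.map (((Function.Embedding.sigmaMk j).trans .inl).trans .inr)

def blockW (j : Fin t) : Finset (LeftV s t α α' β β') :=
  univ.map (((Function.Embedding.sigmaMk j).trans .inr).trans .inr)

@[simp] lemma card_blockA (i : Fin s) : #(blockA i : Finset (LeftV s t α α' β β')) = α i := by
  simp [blockA]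

@[simp] lemma card_blockA' (i : Fin s) :
    #(blockA' i : Finset (LeftV s t α α' β β')) = α' i - α i := by
  simp [blockA']

@[simp] lemma card_blockX (j : Fin t) :
    #(blockX j : Finset (LeftV s t α α' β β')) = β' j - β j := by
  simp [blockX]

@[simp] lemma card_blockW (j : Fin t) :
    #(blockW j : Finset (LeftV s t α α' β β')) = s - β' j := by
  simp [blockW]

lemma mainWeight_eq_cost_mainPairs (δ : Fin s → Fin t → ℝ) (γ' γ'' : ℝ)
    (M : LeftV s t α α' β β' ≃ RightV s t α' β) :
    mainWeight δ γ' γ'' M = cost δ (mainPairs M) := by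
  have main_inl (x : LeftV s t α α' β β') (p : Fin s × Fin t) :
      (if IsMainEdge x (.inl p) then wt δ γ' γ'' x (.inl p) else 0) =
        if x.isLeft then δ p.1 p.2 else 0 := by
    rcases x with x | x <;> rfl
  have main_inr (x : LeftV s t α α' β β') (y : Fin (∑ i, α' i - ∑ j, β j)) :
      IsMainEdge x (.inr y) = false := by
    rcases x with x | x <;> rfl
  rw [mainWeight, cost, mainPairs, sum_filter, sum_filter,
    ← M.symm.sum_comp (fun v => if IsMainEdge v (M v) then wt δ γ' γ'' v (M v) else 0)]
  simp only [Equiv.apply_symm_apply, Fintype.sum_sum_type, main_inl, main_inr]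
  simp

variable {M : LeftV s t α α' β β' ≃ RightV s t α' β}

namespace IsPM

lemma symm_inl_mem_of_isLeft (hM : IsPM M) {p : Fin s × Fin t}
    (h : (M.symm (.inl p)).isLeft) : M.symm (.inl p) ∈ blockA p.1 ∪ blockA' p.1 := by
  have hadj := hM (M.symm (.inl p))
  rw [Equiv.apply_symm_apply] at hadj
  generalize M.symm (.inl p) = x at hadj h ⊢
  rcases x with (⟨i, k⟩ | ⟨i, k⟩) | x
  · obtain rfl : p.1 = i := hadj
    simp [blockA]
  · obtain rfl : p.1 = i := hadj
    simp [blockA']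
  · simp at h

lemma symm_inl_mem_of_not_isLeft (hM : IsPM M) {p : Fin s × Fin t}
    (h : ¬(M.symm (.inl p)).isLeft) : M.symm (.inl p) ∈ blockX p.2 ∪ blockW p.2 := by
  have hadj := hM (M.symm (.inl p))
  rw [Equiv.apply_symm_apply] at hadj
  generalize M.symm (.inl p) = x at hadj h ⊢
  rcases x with x | (⟨j, k⟩ | ⟨j, k⟩)
  · simp at h
  · obtain rfl : p.2 = j := hadj
    simp [blockX]
  · obtain rfl : p.2 = j := hadj
    simp [blockW]

lemma exists_apply_inl_inl (hM : IsPM M) (i : Fin s) (k : Fin (α i)) :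
    ∃ j, M (.inl (.inl ⟨i, k⟩)) = .inl (i, j) := by
  have hadj := hM (.inl (.inl ⟨i, k⟩))
  generalize M (.inl (.inl ⟨i, k⟩)) = y at hadj ⊢
  rcases y with ⟨i', j⟩ | y
  · obtain rfl : i' = i := hadj
    exact ⟨j, rfl⟩
  · exact hadj.elim

lemma exists_apply_inr_inr (hM : IsPM M) (j : Fin t) (k : Fin (s - β' j)) :
    ∃ i, M (.inr (.inr ⟨j, k⟩)) = .inl (i, j) := by
  have hadj := hM (.inr (.inr ⟨j, k⟩))
  generalize M (.inr (.inr ⟨j, k⟩)) = y at hadj ⊢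
  rcases y with ⟨i, j'⟩ | y
  · obtain rfl : j' = j := hadj
    exact ⟨i, rfl⟩
  · exact hadj.elim

lemma card_row_bounds (hM : IsPM M) (i : Fin s) (hαα : α i ≤ α' i) :
    α i ≤ #((mainPairs M).filter (·.1 = i)) ∧ #((mainPairs M).filter (·.1 = i)) ≤ α' i := by
  set row := (mainPairs M).filter (·.1 = i)
  constructor
  · have hA : blockA i ⊆ row.image fun p => M.symm (.inl p) := by
      intro x hx
      obtain ⟨k, -, rfl⟩ := mem_map.mp hx
      obtain ⟨j, hj⟩ := hM.exists_apply_inl_inl i k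
      have hsymm : M.symm (.inl (i, j)) = .inl (.inl ⟨i, k⟩) := M.symm_apply_eq.mpr hj.symm
      exact mem_image.mpr ⟨(i, j), by simp [row, mainPairs, hsymm], hsymm⟩
    calc α i = #(blockA i : Finset (LeftV s t α α' β β')) := (card_blockA i).symm
      _ ≤ #(row.image fun p => M.symm (.inl p)) := card_le_card hA
      _ ≤ #row := card_image_le
  · have hmaps : Set.MapsTo (fun p => M.symm (.inl p)) row
        (blockA i ∪ blockA' i : Finset (LeftV s t α α' β β')) := by
      intro p hp
      obtain ⟨hleft, rfl⟩ := mem_filter.mp hp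
      exact hM.symm_inl_mem_of_isLeft (mem_filter.mp hleft).2
    calc #row ≤ #(blockA i ∪ blockA' i) :=
          card_le_card_of_injOn _ hmaps (M.symm.injective.comp Sum.inl_injective).injOn
      _ ≤ #(blockA i) + #(blockA' i) := card_union_le _ _
      _ = α' i := by simp only [card_blockA, card_blockA']; omega

lemma card_col_bounds (hM : IsPM M) (j : Fin t) (hββ : β j ≤ β' j) (hβ's : β' j ≤ s) :
    β j ≤ #((mainPairs M).filter (·.2 = j)) ∧ #((mainPairs M).filter (·.2 = j)) ≤ β' j := by
  set col := univ.filter fun p : Fin s × Fin t => p.2 = j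
  set rest := col.filter fun p => ¬(M.symm (.inl p)).isLeft
  have hcol : (mainPairs M).filter (·.2 = j) = col.filter fun p => (M.symm (.inl p)).isLeft := by
    simp only [mainPairs, col, filter_filter, and_comm]
  have hsplit : #((mainPairs M).filter (·.2 = j)) + #rest = s := by
    rw [hcol, card_filter_add_card_filter_not]
    have : col = univ ×ˢ {j} := by ext ⟨i, j'⟩; simp [col, eq_comm]
    simp [this]
  have hW : blockW j ⊆ rest.image fun p => M.symm (.inl p) := by
    intro x hx
    obtain ⟨k, -, rfl⟩ := mem_map.mp hx
    obtain ⟨i, hi⟩ := hM.exists_apply_inr_inr j k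
    have hsymm : M.symm (.inl (i, j)) = .inr (.inr ⟨j, k⟩) := M.symm_apply_eq.mpr hi.symm
    exact mem_image.mpr ⟨(i, j), by simp [rest, col, hsymm], hsymm⟩
  have hmaps : Set.MapsTo (fun p => M.symm (.inl p)) rest
      (blockX j ∪ blockW j : Finset (LeftV s t α α' β β')) := by
    intro p hp
    obtain ⟨hp, hright⟩ := mem_filter.mp hp
    obtain rfl := (mem_filter.mp hp).2
    exact hM.symm_inl_mem_of_not_isLeft hright
  have hrest_ge := calc
    s - β' j = #(blockW j : Finset (LeftV s t α α' β β')) := (card_blockW j).symm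
    _ ≤ #(rest.image fun p => M.symm (.inl p)) := card_le_card hW
    _ ≤ #rest := card_image_le
  have hrest_le := calc
    #rest ≤ #(blockX j ∪ blockW j) :=
        card_le_card_of_injOn _ hmaps (M.symm.injective.comp Sum.inl_injective).injOn
    _ ≤ #(blockX j) + #(blockW j) := card_union_le _ _
    _ = β' j - β j + (s - β' j) := by simp only [card_blockX, card_blockW]
  omega

lemma isMMDC_mainPairs (hM : IsPM M) (hαα : ∀ i, α i ≤ α' i) (hββ : ∀ j, β j ≤ β' j)
    (hβ's : ∀ j, β' j ≤ s) : IsMMDC α α' β β' (mainPairs M) :=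
  ⟨fun i => hM.card_row_bounds i (hαα i), fun j => hM.card_col_bounds j (hββ j) (hβ's j)⟩

end IsPM

end Extraction

theorem mmdc_of_pm_general {s t : ℕ} (α α' : Fin s → ℕ) (β β' : Fin t → ℕ)
    (δ : Fin s → Fin t → ℝ) (γ' γ'' : ℝ)
    (hαα : ∀ i, α i ≤ α' i)
    (hββ : ∀ j, β j ≤ β' j) (hβ's : ∀ j, β' j ≤ s)
    (M : LeftV s t α α' β β' ≃ RightV s t α' β) (hM : IsPM M)
    (L' : Finset (Fin s × Fin t))
    (hL' : L' = univ.filter (fun p : Fin s × Fin t => (M.symm (Sum.inl p)).isLeft)) :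
    IsMMDC α α' β β' L' ∧ cost δ L' = mainWeight δ γ' γ'' M := by
  rw [hL', ← mainPairs, mainWeight_eq_cost_mainPairs]
  exact ⟨hM.isMMDC_mainPairs hαα hββ hβ's, rfl⟩

/-- **Lemma 4, extraction direction.** Let `M` be any perfect matching of
the constructed graph `G`, and let `L'` consist of the pairs `(a_i, b_j)` such that `M`
contains a main edge joining a vertex of `A_i ∪ A'_i` to the vertex `b_{ji}` (i.e. the
partner of `b_{ji} = (i, j)` under `M` lies in the left blocks `A_i ∪ A'_i`).  Then `L'`
is an MMDC between `A` and `B` and `c(L') = Weight(Main(M))`. -/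
theorem mmdc_of_pm {s t : ℕ} (α α' : Fin s → ℕ) (β β' : Fin t → ℕ)
    (δ : Fin s → Fin t → ℝ) (γ' γ'' : ℝ)
    (hs : 1 ≤ s) (ht : 1 ≤ t)
    (hδ0 : ∀ i j, 0 ≤ δ i j)
    (hα1 : ∀ i, 1 ≤ α i) (hαα : ∀ i, α i ≤ α' i) (hα't : ∀ i, α' i ≤ t)
    (hβ1 : ∀ j, 1 ≤ β j) (hββ : ∀ j, β j ≤ β' j) (hβ's : ∀ j, β' j ≤ s)
    (hsum : ∑ j, β j ≤ ∑ i, α' i)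
    (hγ' : ∀ i j, δ i j < γ') (hγ'' : γ' < γ'')
    (M : LeftV s t α α' β β' ≃ RightV s t α' β) (hM : IsPM M)
    (L' : Finset (Fin s × Fin t))
    (hL' : L' = univ.filter (fun p : Fin s × Fin t => (M.symm (Sum.inl p)).isLeft)) :
    IsMMDC α α' β β' L' ∧ cost δ L' = mainWeight δ γ' γ'' M :=
  mmdc_of_pm_general α α' β β' δ γ' γ'' hαα hββ hβ's M hM L' hL'
end

section
/- (Non-main weight formula, Lemma 3 computation.) Let M be any perfect matching of the constructed graph G and let k = |Main(M)| be its number of main edges. Then the total weight of the non-main edges of M satisfies Weight(M) − Weight(Main(M)) = γ'·(Σ_j β'_j − k) + γ''·(k − Σ_j β_j) + γ'·(Σ_i α'_i − k); in particular, the non-main weight of a perfect matching of G depends only on its number of main edges. -/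
open Finset

theorem nonmain_weight_key {s t : ℕ} {α α' : Fin s → ℕ} {β β' : Fin t → ℕ}
    (δ : Fin s → Fin t → ℝ) (γ' γ'' : ℝ)
    (hαα : ∀ i, α i ≤ α' i) (hββ : ∀ j, β j ≤ β' j)
    (hsum : ∑ j, β j ≤ ∑ i, α' i)
    (M : LeftV s t α α' β β' ≃ RightV s t α' β) (hM : IsPM M) :
    totalWeight δ γ' γ'' M - mainWeight δ γ' γ'' M =
        γ' * ((∑ j, (β' j : ℝ)) - (mainCount M : ℝ)) +
        γ'' * ((mainCount M : ℝ) - ∑ j, (β j : ℝ)) +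
        γ' * ((∑ i, (α' i : ℝ)) - (mainCount M : ℝ)) := by
  classical
  set F : LeftV s t α α' β β' → ℝ :=
    fun v => if IsMainEdge v (M v) then 0 else wt δ γ' γ'' v (M v) with hF
  set ind : RightV s t α' β → ℝ := fun w => if w.isRight then 1 else 0 with hind
  set a : ℝ := ∑ v : Σ i : Fin s, Fin (α' i - α i), ind (M (Sum.inl (Sum.inr v))) with ha
  set x : ℝ := ∑ v : Σ j : Fin t, Fin (β' j - β j), ind (M (Sum.inr (Sum.inl v))) with hx
  -- evaluate F on each component
  have hA : ∀ v : Σ i : Fin s, Fin (α i), F (Sum.inl (Sum.inl v)) = 0 := by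
    rintro ⟨i, c⟩
    have h := hM (Sum.inl (Sum.inl ⟨i, c⟩))
    rcases hMv : M (Sum.inl (Sum.inl ⟨i, c⟩)) with w | y
    · simp [hF, hMv, IsMainEdge]
    · rw [hMv] at h; exact h.elim
  have hA' : ∀ v : Σ i : Fin s, Fin (α' i - α i),
      F (Sum.inl (Sum.inr v)) = γ' * ind (M (Sum.inl (Sum.inr v))) := by
    rintro ⟨i, c⟩
    rcases hMv : M (Sum.inl (Sum.inr ⟨i, c⟩)) with w | y
    · simp [hF, hind, hMv, IsMainEdge]
    · simp [hF, hind, hMv, IsMainEdge, wt]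
  have hX : ∀ v : Σ j : Fin t, Fin (β' j - β j),
      F (Sum.inr (Sum.inl v)) = γ' + (γ'' - γ') * ind (M (Sum.inr (Sum.inl v))) := by
    rintro ⟨j, c⟩
    rcases hMv : M (Sum.inr (Sum.inl ⟨j, c⟩)) with w | y
    · simp [hF, hind, hMv, IsMainEdge, wt]
    · simp [hF, hind, hMv, IsMainEdge, wt]
  have hW : ∀ v : Σ j : Fin t, Fin (s - β' j), F (Sum.inr (Sum.inr v)) = 0 := by
    rintro ⟨j, c⟩
    have h := hM (Sum.inr (Sum.inr ⟨j, c⟩))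
    rcases hMv : M (Sum.inr (Sum.inr ⟨j, c⟩)) with w | y
    · simp [hF, hMv, IsMainEdge, wt]
    · rw [hMv] at h; exact h.elim
  -- the difference is the sum of F
  have hdiff0 : totalWeight δ γ' γ'' M - mainWeight δ γ' γ'' M = ∑ v, F v := by
    unfold totalWeight mainWeight
    rw [Finset.sum_filter, ← Finset.sum_sub_distrib]
    refine Finset.sum_congr rfl fun v _ => ?_
    by_cases h : IsMainEdge v (M v) <;> simp [hF, h]
  -- cardinalities as reals
  have hcardX : ((∑ j, (β' j - β j) : ℕ) : ℝ) = (∑ j, (β' j : ℝ)) - ∑ j, (β j : ℝ) := by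
    push_cast
    rw [← Finset.sum_sub_distrib]
    exact Finset.sum_congr rfl fun j _ => by
      rw [Nat.cast_sub (hββ j)]
  have hcardA' : ((∑ i, (α' i - α i) : ℕ) : ℝ) = (∑ i, (α' i : ℝ)) - ∑ i, (α i : ℝ) := by
    push_cast
    rw [← Finset.sum_sub_distrib]
    exact Finset.sum_congr rfl fun i _ => by
      rw [Nat.cast_sub (hαα i)]
  have hdiff : totalWeight δ γ' γ'' M - mainWeight δ γ' γ'' M =
      γ' * a + (((∑ j, (β' j : ℝ)) - ∑ j, (β j : ℝ)) * γ' + (γ'' - γ') * x) := by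
    rw [hdiff0]
    simp only [Fintype.sum_sum_type]
    rw [Finset.sum_congr rfl fun v _ => hA v, Finset.sum_congr rfl fun v _ => hA' v,
      Finset.sum_congr rfl fun v _ => hX v, Finset.sum_congr rfl fun v _ => hW v]
    rw [Finset.sum_add_distrib, ← Finset.mul_sum, ← Finset.mul_sum]
    simp only [Finset.sum_const_zero, Finset.sum_const, Finset.card_univ, Fintype.card_sigma,
      Fintype.card_fin, nsmul_eq_mul, hcardX]
    ring
  -- counting: a + x = Σ α' - Σ β
  have hAind : ∀ v : Σ i : Fin s, Fin (α i), ind (M (Sum.inl (Sum.inl v))) = 0 := by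
    rintro ⟨i, c⟩
    have h := hM (Sum.inl (Sum.inl ⟨i, c⟩))
    rcases hMv : M (Sum.inl (Sum.inl ⟨i, c⟩)) with w | y
    · simp [hind, hMv]
    · rw [hMv] at h; exact h.elim
  have hWind : ∀ v : Σ j : Fin t, Fin (s - β' j), ind (M (Sum.inr (Sum.inr v))) = 0 := by
    rintro ⟨j, c⟩
    have h := hM (Sum.inr (Sum.inr ⟨j, c⟩))
    rcases hMv : M (Sum.inr (Sum.inr ⟨j, c⟩)) with w | y
    · simp [hind, hMv]
    · rw [hMv] at h; exact h.elim
  have claim2 : a + x = (∑ i, (α' i : ℝ)) - ∑ j, (β j : ℝ) := by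
    have hbij : ∑ v, ind (M v) = ∑ w, ind w := Equiv.sum_comp M ind
    have hY : ∑ w : RightV s t α' β, ind w =
        (∑ i, (α' i : ℝ)) - ∑ j, (β j : ℝ) := by
      rw [Fintype.sum_sum_type]
      simp [hind, Nat.cast_sub hsum]
    have hL : ∑ v, ind (M v) = a + x := by
      simp only [Fintype.sum_sum_type]
      rw [Finset.sum_congr rfl fun v _ => hAind v, Finset.sum_congr rfl fun v _ => hWind v]
      simp [ha, hx]
    rw [← hL, hbij, hY]
  -- counting: mainCount = Σ α' - a
  have hCmain : ∀ v : Σ i : Fin s, Fin (α i),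
      (if IsMainEdge (Sum.inl (Sum.inl v) : LeftV s t α α' β β') (M (Sum.inl (Sum.inl v)))
        then (1:ℝ) else 0) = 1 := by
    rintro ⟨i, c⟩
    have h := hM (Sum.inl (Sum.inl ⟨i, c⟩))
    rcases hMv : M (Sum.inl (Sum.inl ⟨i, c⟩)) with w | y
    · simp [hMv, IsMainEdge]
    · rw [hMv] at h; exact h.elim
  have hCmain' : ∀ v : Σ i : Fin s, Fin (α' i - α i),
      (if IsMainEdge (Sum.inl (Sum.inr v) : LeftV s t α α' β β') (M (Sum.inl (Sum.inr v)))
        then (1:ℝ) else 0) = 1 - ind (M (Sum.inl (Sum.inr v))) := by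
    rintro ⟨i, c⟩
    rcases hMv : M (Sum.inl (Sum.inr ⟨i, c⟩)) with w | y
    · simp [hMv, IsMainEdge, hind]
    · simp [hMv, IsMainEdge, hind]
  have claim3 : (mainCount M : ℝ) = (∑ i, (α' i : ℝ)) - a := by
    have h0 : (mainCount M : ℝ) =
        ∑ v, (if IsMainEdge v (M v) then (1:ℝ) else 0) := by
      rw [mainCount, Finset.card_filter, Nat.cast_sum]
      exact Finset.sum_congr rfl fun v _ => by
        by_cases h : IsMainEdge v (M v) <;> simp [h]
    rw [h0]
    simp only [Fintype.sum_sum_type]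
    rw [Finset.sum_congr rfl fun v _ => hCmain v,
      Finset.sum_congr rfl fun v _ => hCmain' v]
    have hXzero : ∀ v : Σ j : Fin t, Fin (β' j - β j),
        (if IsMainEdge (Sum.inr (Sum.inl v) : LeftV s t α α' β β') (M (Sum.inr (Sum.inl v)))
          then (1:ℝ) else 0) = 0 := by
      rintro ⟨j, c⟩
      rcases hMv : M (Sum.inr (Sum.inl ⟨j, c⟩)) with w | y <;> simp [hMv, IsMainEdge]
    have hWzero : ∀ v : Σ j : Fin t, Fin (s - β' j),
        (if IsMainEdge (Sum.inr (Sum.inr v) : LeftV s t α α' β β') (M (Sum.inr (Sum.inr v)))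
          then (1:ℝ) else 0) = 0 := by
      rintro ⟨j, c⟩
      rcases hMv : M (Sum.inr (Sum.inr ⟨j, c⟩)) with w | y <;> simp [hMv, IsMainEdge]
    rw [Finset.sum_congr rfl fun v _ => hXzero v, Finset.sum_congr rfl fun v _ => hWzero v]
    rw [Finset.sum_sub_distrib, Finset.sum_const, Finset.sum_const]
    simp only [Finset.sum_const_zero, Finset.card_univ, Fintype.card_sigma, Fintype.card_fin,
      nsmul_eq_mul, mul_one, add_zero]
    rw [hcardA']
    push_cast
    ring
  have hA2 : a = (∑ i, (α' i : ℝ)) - (mainCount M : ℝ) := by linarith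
  have hX2 : x = (mainCount M : ℝ) - ∑ j, (β j : ℝ) := by linarith
  rw [hdiff, hA2, hX2]
  ring

/-- **non-main weight formula, Lemma 3 computation.** For any perfect
matching `M` of `G` with `k = |Main(M)|` main edges, the total weight of the non-main
edges of `M` is
`Weight(M) − Weight(Main(M)) = γ'·(Σ_j β'_j − k) + γ''·(k − Σ_j β_j) + γ'·(Σ_i α'_i − k)`;
in particular the non-main weight of a perfect matching depends only on its number of
main edges. -/
theorem nonmain_weight_formula {s t : ℕ} (α α' : Fin s → ℕ) (β β' : Fin t → ℕ)
    (δ : Fin s → Fin t → ℝ) (γ' γ'' : ℝ)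
    (hs : 1 ≤ s) (ht : 1 ≤ t)
    (hδ0 : ∀ i j, 0 ≤ δ i j)
    (hα1 : ∀ i, 1 ≤ α i) (hαα : ∀ i, α i ≤ α' i) (hα't : ∀ i, α' i ≤ t)
    (hβ1 : ∀ j, 1 ≤ β j) (hββ : ∀ j, β j ≤ β' j) (hβ's : ∀ j, β' j ≤ s)
    (hsum : ∑ j, β j ≤ ∑ i, α' i)
    (hγ' : ∀ i j, δ i j < γ') (hγ'' : γ' < γ'')
    (M : LeftV s t α α' β β' ≃ RightV s t α' β) (hM : IsPM M) :
    totalWeight δ γ' γ'' M - mainWeight δ γ' γ'' M =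
        γ' * ((∑ j, (β' j : ℝ)) - (mainCount M : ℝ)) +
        γ'' * ((mainCount M : ℝ) - ∑ j, (β j : ℝ)) +
        γ' * ((∑ i, (α' i : ℝ)) - (mainCount M : ℝ)) ∧
    ∀ M' : LeftV s t α α' β β' ≃ RightV s t α' β, IsPM M' → mainCount M' = mainCount M →
      totalWeight δ γ' γ'' M' - mainWeight δ γ' γ'' M' =
        totalWeight δ γ' γ'' M - mainWeight δ γ' γ'' M := by
  have key := nonmain_weight_key δ γ' γ'' hαα hββ hsum M hM
  refine ⟨key, fun M' hM' hk => ?_⟩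
  rw [key, nonmain_weight_key δ γ' γ'' hαα hββ hsum M' hM', hk]
end

section
/- (Bounds on the number of main edges.) For every perfect matching M of the constructed graph G, the number k = |Main(M)| of main edges of M satisfies max(Σ_i α_i, Σ_j β_j) ≤ k ≤ min(Σ_i α'_i, Σ_j β'_j). -/
open Finset

/-! A vertex of `A_i` or `W_j` is adjacent only to vertices of `⋃_i Bset_i`, a vertex of `A'_i`
or `X_j` may or may not be matched there, and all `s * t` vertices of `⋃_i Bset_i` are matched.
Hence `Σ α_i = |A| ≤ k ≤ |A ∪ A'| = Σ α'_i`, and `k = s t - d`, where the number `d` of vertices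
of `X ∪ W` matched into `⋃_i Bset_i` lies between `|W| = Σ (s - β'_j)` and
`|X ∪ W| = Σ (s - β_j)`. -/

theorem Finset.card_filter_sum_type {α β : Type*} [Fintype α] [Fintype β]
    (p : α ⊕ β → Prop) [DecidablePred p] :
    #{x | p x} = #{a | p (.inl a)} + #{b | p (.inr b)} := by
  simp only [card_filter, Fintype.sum_sum_type]

theorem Finset.sum_tsub_add_sum_of_le {ι : Type*} (u : Finset ι) {f g : ι → ℕ}
    (h : ∀ i ∈ u, f i ≤ g i) : ∑ i ∈ u, (g i - f i) + ∑ i ∈ u, f i = ∑ i ∈ u, g i := by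
  rw [← sum_add_distrib]
  exact sum_congr rfl fun i hi => Nat.sub_add_cancel (h i hi)

section Matching

variable {s t : ℕ} {α α' : Fin s → ℕ} {β β' : Fin t → ℕ}
  {M : LeftV s t α α' β β' ≃ RightV s t α' β}

theorem IsPM.isLeft_apply_inl_inl (hM : IsPM M) (x : Σ i, Fin (α i)) :
    (M (.inl (.inl x))).isLeft := by
  have h := hM (.inl (.inl x))
  revert h
  cases M (.inl (.inl x)) <;> simp [Adj]

theorem IsPM.isLeft_apply_inr_inr (hM : IsPM M) (x : Σ j, Fin (s - β' j)) :
    (M (.inr (.inr x))).isLeft := by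
  have h := hM (.inr (.inr x))
  revert h
  cases M (.inr (.inr x)) <;> simp [Adj]

variable (M) in
theorem mainCount_eq_card_filter_isLeft :
    mainCount M = #{a | (M (.inl a)).isLeft} := by
  have hmain (v) : IsMainEdge v (M v) = (v.isLeft && (M v).isLeft) := by
    rcases v with _ | _ <;> cases M _ <;> rfl
  simp only [mainCount, hmain, card_filter_sum_type]
  simp

variable (M) in
theorem mainCount_add_card_dummy_matched_into_bset :
    mainCount M + #{x | (M (.inr x)).isLeft} = s * t := by
  have hcard : #{v | (M v).isLeft} = #{r : RightV s t α' β | r.isLeft} :=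
    card_equiv M fun _ => by simp
  have hright : #{r : RightV s t α' β | r.isLeft} = s * t := by
    simp [card_filter_sum_type]
  rw [mainCount_eq_card_filter_isLeft, ← hright, ← hcard]
  exact (card_filter_sum_type fun v => (M v).isLeft).symm

theorem IsPM.card_le_mainCount (hM : IsPM M) :
    Fintype.card (Σ i, Fin (α i)) ≤ mainCount M := by
  rw [mainCount_eq_card_filter_isLeft, card_filter_sum_type,
    filter_true_of_mem fun x _ => hM.isLeft_apply_inl_inl x]
  exact Nat.le_add_right _ _

variable (M) in
theorem mainCount_le_card :
    mainCount M ≤ Fintype.card ((Σ i, Fin (α i)) ⊕ (Σ i, Fin (α' i - α i))) := by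
  rw [mainCount_eq_card_filter_isLeft]
  exact card_le_univ _

theorem IsPM.card_le_card_dummy_matched_into_bset (hM : IsPM M) :
    Fintype.card (Σ j, Fin (s - β' j)) ≤ #{x | (M (.inr x)).isLeft} := by
  rw [card_filter_sum_type, filter_true_of_mem fun x _ => hM.isLeft_apply_inr_inr x]
  exact Nat.le_add_left _ _

end Matching

theorem mainCount_bounds_general {s t : ℕ} (α α' : Fin s → ℕ) (β β' : Fin t → ℕ)
    (hαα : ∀ i, α i ≤ α' i) (hββ : ∀ j, β j ≤ β' j) (hβ's : ∀ j, β' j ≤ s)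
    (M : LeftV s t α α' β β' ≃ RightV s t α' β) (hM : IsPM M) :
    max (∑ i, α i) (∑ j, β j) ≤ mainCount M ∧
      mainCount M ≤ min (∑ i, α' i) (∑ j, β' j) := by
  have hα := sum_tsub_add_sum_of_le univ fun i _ => hαα i
  have hβ := sum_tsub_add_sum_of_le univ fun j _ => hββ j
  have hβ' := sum_tsub_add_sum_of_le univ fun j _ => hβ's j
  have hA := hM.card_le_mainCount
  have hAA' := mainCount_le_card M
  have hW := hM.card_le_card_dummy_matched_into_bset
  have hXW := card_le_univ (s := {x | (M (.inr x)).isLeft})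
  have htotal := mainCount_add_card_dummy_matched_into_bset M
  simp only [card_univ, Fintype.card_sum, Fintype.card_sigma, sum_const, Fintype.card_fin,
    smul_eq_mul] at hβ' hA hAA' hW hXW
  constructor
  · refine max_le ?_ ?_ <;> lia
  · refine le_min ?_ ?_ <;> lia

/-- **bounds on the number of main edges.** For every perfect matching `M`
of the constructed graph `G`, the number `k = |Main(M)|` of main edges satisfies
`max(Σ_i α_i, Σ_j β_j) ≤ k ≤ min(Σ_i α'_i, Σ_j β'_j)`. -/
theorem mainCount_bounds {s t : ℕ} (α α' : Fin s → ℕ) (β β' : Fin t → ℕ)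
    (δ : Fin s → Fin t → ℝ) (γ' γ'' : ℝ)
    (hs : 1 ≤ s) (ht : 1 ≤ t)
    (hδ0 : ∀ i j, 0 ≤ δ i j)
    (hα1 : ∀ i, 1 ≤ α i) (hαα : ∀ i, α i ≤ α' i) (hα't : ∀ i, α' i ≤ t)
    (hβ1 : ∀ j, 1 ≤ β j) (hββ : ∀ j, β j ≤ β' j) (hβ's : ∀ j, β' j ≤ s)
    (hsum : ∑ j, β j ≤ ∑ i, α' i)
    (hγ' : ∀ i j, δ i j < γ') (hγ'' : γ' < γ'')
    (M : LeftV s t α α' β β' ≃ RightV s t α' β) (hM : IsPM M) :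
    max (∑ i, α i) (∑ j, β j) ≤ mainCount M ∧
      mainCount M ≤ min (∑ i, α' i) (∑ j, β' j) :=
  mainCount_bounds_general α α' β β' hαα hββ hβ's M hM
end
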